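/- In the piecewise setting on [−1,1], assume additionally that every interior breakpoint satisfies b_i ∈ [−0.9, 0.9]. Then there exists a universal constant C > 0 (independent of N, K, g and the breakpoints) such that for every integer N ≥ 2, the tail sum of the squared jump terms satisfies Σ_{n=N}^∞ B_n² ≤ C·S²·ζ(2, N), where B_n = (1/(2√(2n+1)))·Σ_{i=1}^{K} (g_i(b_i) − g_{i+1}(b_i))·(P_{n+1}(b_i) − P_{n−1}(b_i)) and S = Σ_{i=1}^K |g_{i+1}(b_i) − g_i(b_i)|. -/

import Mathlib

open MeasureTheory Set

noncomputable def legendreP (n : ℕ) (y : ℝ) : ℝ :=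
  (1 / ((2 : ℝ) ^ n * (n.factorial : ℝ))) *
    iteratedDeriv n (fun x : ℝ => (x ^ 2 - 1) ^ n) y

noncomputable def hzeta (s a : ℝ) : ℝ := ∑' k : ℕ, ((k : ℝ) + a) ^ (-s)

noncomputable def legCoeff (g : ℝ → ℝ) (n : ℕ) : ℝ :=
  (Real.sqrt (2 * (n : ℝ) + 1) / 2) * ∫ y in (-1 : ℝ)..1, g y * legendreP n y

noncomputable def Aterm (K : ℕ) (b : ℕ → ℝ) (G : ℕ → ℝ → ℝ) (n : ℕ) : ℝ :=
  -(1 / (2 * Real.sqrt (2 * (n : ℝ) + 1))) *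
    ∑ i ∈ Finset.range (K + 1),
      ∫ y in (b i)..(b (i + 1)),
        derivWithin (G i) (Set.Icc (b i) (b (i + 1))) y *
          (legendreP (n + 1) y - legendreP (n - 1) y)

noncomputable def Bterm (K : ℕ) (b : ℕ → ℝ) (G : ℕ → ℝ → ℝ) (n : ℕ) : ℝ :=
  (1 / (2 * Real.sqrt (2 * (n : ℝ) + 1))) *
    ∑ i ∈ Finset.Icc 1 K,
      (G (i - 1) (b i) - G i (b i)) *
        (legendreP (n + 1) (b i) - legendreP (n - 1) (b i))

noncomputable def jumpSum (K : ℕ) (b : ℕ → ℝ) (G : ℕ → ℝ → ℝ) : ℝ :=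
  ∑ i ∈ Finset.Icc 1 K, |G i (b i) - G (i - 1) (b i)|

/-! The jump term `Bterm n` is a combination of the differences `P_{n+1}(b_i) - P_{n-1}(b_i)` at
breakpoints bounded away from `±1`, so everything reduces to the Bernstein-type bound
`n (1 - x²) P_n(x)² ≤ 4`. With `V = (d/dx)^n (x² - 1)^n`, Legendre's equation shows that Sonin's
function `n(n+1)(1 - x²)V² + (1 - x²)²V'²` has derivative `-2n(n+1) x V²`, so it is maximal at
`x = 0`, where it is an explicit expression in middle binomial coefficients, controlled by
`C(2m, m)² (3m + 1) ≤ 16^m`. Hence `B_n² ≤ C S² / n²`, and summing over `n ≥ N` gives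
`C S² ζ(2, N)`. -/

open Polynomial

theorem Nat.centralBinom_sq_mul_le (m : ℕ) : m.centralBinom ^ 2 * (3 * m + 1) ≤ 16 ^ m := by
  induction m with
  | zero => simp
  | succ m ih =>
    have hcubic : (2 * m + 1) ^ 2 * (3 * m + 4) ≤ 4 * (m + 1) ^ 2 * (3 * m + 1) := by
      ring_nf; omega
    have key : (m + 1).centralBinom ^ 2 * (3 * (m + 1) + 1) * (m + 1) ^ 2 ≤
        16 ^ (m + 1) * (m + 1) ^ 2 :=
      calc (m + 1).centralBinom ^ 2 * (3 * (m + 1) + 1) * (m + 1) ^ 2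
          = ((m + 1) * (m + 1).centralBinom) ^ 2 * (3 * m + 4) := by ring
        _ = 4 * m.centralBinom ^ 2 * ((2 * m + 1) ^ 2 * (3 * m + 4)) := by
            rw [Nat.succ_mul_centralBinom_succ]; ring
        _ ≤ 4 * m.centralBinom ^ 2 * (4 * (m + 1) ^ 2 * (3 * m + 1)) := by gcongr
        _ = 16 * (m + 1) ^ 2 * (m.centralBinom ^ 2 * (3 * m + 1)) := by ring
        _ ≤ 16 * (m + 1) ^ 2 * 16 ^ m := by gcongr
        _ = 16 ^ (m + 1) * (m + 1) ^ 2 := by ring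
    exact Nat.le_of_mul_le_mul_right key (by positivity)

theorem Nat.succ_mul_choose_sq_le (n k : ℕ) : (n + 1) * n.choose k ^ 2 ≤ 2 * 4 ^ n := by
  calc (n + 1) * n.choose k ^ 2 ≤ (n + 1) * n.choose (n / 2) ^ 2 := by
        gcongr; exact Nat.choose_le_middle k n
    _ ≤ 2 * 4 ^ n := ?_
  obtain ⟨m, rfl | rfl⟩ := Nat.even_or_odd' n
  · rw [show 2 * m / 2 = m by omega, ← Nat.centralBinom_eq_two_mul_choose, pow_mul]
    calc (2 * m + 1) * m.centralBinom ^ 2 ≤ m.centralBinom ^ 2 * (3 * m + 1) := by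
          rw [mul_comm]; gcongr; omega
      _ ≤ 2 * (4 ^ 2) ^ m := by have := m.centralBinom_sq_mul_le; norm_num; omega
  · have hmid : (2 * m + 1).choose m ≤ 2 * m.centralBinom := by
      rw [← Nat.choose_symm_half, Nat.choose_succ_succ, Nat.centralBinom_eq_two_mul_choose,
        two_mul ((2 * m).choose m)]
      gcongr
      exact Nat.choose_le_centralBinom _ _
    rw [show (2 * m + 1) / 2 = m by omega]
    calc (2 * m + 1 + 1) * (2 * m + 1).choose m ^ 2 ≤ 2 * (m + 1) * (2 * m.centralBinom) ^ 2 := by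
          gcongr; omega
      _ ≤ 8 * (m.centralBinom ^ 2 * (3 * m + 1)) := by ring_nf; nlinarith
      _ ≤ 8 * 16 ^ m := by gcongr; exact m.centralBinom_sq_mul_le
      _ = 2 * 4 ^ (2 * m + 1) := by rw [pow_succ, pow_mul]; ring

theorem coeff_X_sq_sub_one_pow (n k : ℕ) :
    ((X ^ 2 - 1 : ℝ[X]) ^ n).coeff k =
      if 2 ∣ k then (-1 : ℝ) ^ (n - k / 2) * n.choose (k / 2) else 0 := by
  have : (X ^ 2 - 1 : ℝ[X]) ^ n = expand ℝ 2 ((X + C (-1)) ^ n) := by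
    simp [sub_eq_add_neg]
  rw [this, coeff_expand two_pos, coeff_X_add_C_pow]

theorem succ_mul_coeff_X_sq_sub_one_pow_sq_le (n k : ℕ) :
    (n + 1) * ((X ^ 2 - 1 : ℝ[X]) ^ n).coeff k ^ 2 ≤ 2 * 4 ^ n := by
  rw [coeff_X_sq_sub_one_pow]
  split_ifs
  · rw [mul_pow, ← pow_mul, mul_comm _ 2, pow_mul]
    norm_num
    exact_mod_cast Nat.succ_mul_choose_sq_le n (k / 2)
  · rw [zero_pow two_ne_zero, mul_zero]
    positivity

noncomputable def rodrigues (n : ℕ) : ℝ[X] := derivative^[n] ((X ^ 2 - 1) ^ n)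

theorem Polynomial.iteratedDeriv_eval (p : ℝ[X]) (k : ℕ) :
    iteratedDeriv k (fun x => p.eval x) = fun x => (derivative^[k] p).eval x := by
  induction k with
  | zero => simp
  | succ k ih =>
    rw [iteratedDeriv_succ, ih, Function.iterate_succ_apply']
    funext x
    exact Polynomial.deriv _

theorem legendreP_eq_eval_rodrigues (n : ℕ) (y : ℝ) :
    legendreP n y = (rodrigues n).eval y / (2 ^ n * n.factorial) := by
  have h : (fun x : ℝ => (x ^ 2 - 1) ^ n) = fun x => ((X ^ 2 - 1 : ℝ[X]) ^ n).eval x := by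
    simp
  rw [legendreP, h, iteratedDeriv_eval, rodrigues, one_div_mul_eq_div]

theorem X_sq_sub_one_mul_derivative_pow (n : ℕ) :
    (X ^ 2 - 1) * derivative ((X ^ 2 - 1 : ℝ[X]) ^ n) = 2 * (n : ℝ[X]) * X * (X ^ 2 - 1) ^ n := by
  cases n with
  | zero => simp
  | succ m =>
    rw [derivative_pow, pow_succ _ m]
    simp only [Nat.add_sub_cancel, derivative_sub, derivative_one, derivative_X_pow, C_eq_natCast]
    push_cast
    ring

theorem X_sq_sub_one_mul_iterate_derivative_pow (n k : ℕ) :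
    (X ^ 2 - 1) * derivative^[k + 2] ((X ^ 2 - 1 : ℝ[X]) ^ n) =
      2 * ((n : ℝ[X]) - ((k : ℝ[X]) + 1)) * X * derivative^[k + 1] ((X ^ 2 - 1) ^ n) +
        ((k : ℝ[X]) + 1) * (2 * (n : ℝ[X]) - (k : ℝ[X])) * derivative^[k] ((X ^ 2 - 1) ^ n) := by
  induction k with
  | zero =>
    have h := congrArg derivative (X_sq_sub_one_mul_derivative_pow n)
    simp only [derivative_mul, derivative_sub, derivative_one, derivative_X_pow, derivative_X,
      derivative_natCast, derivative_ofNat, C_eq_natCast] at h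
    simp only [Function.iterate_succ_apply', Function.iterate_zero, id_eq]
    push_cast at h ⊢
    linear_combination h
  | succ k ih =>
    have h := congrArg derivative ih
    simp only [derivative_mul, derivative_add, derivative_sub, derivative_X, derivative_X_pow,
      derivative_natCast, derivative_ofNat, derivative_one, C_eq_natCast] at h
    simp only [Function.iterate_succ_apply'] at h ⊢
    push_cast at h ⊢
    linear_combination h

theorem rodrigues_ode (n : ℕ) :
    (X ^ 2 - 1) * derivative (derivative (rodrigues n)) + 2 * X * derivative (rodrigues n) =
      (n : ℝ[X]) * ((n : ℝ[X]) + 1) * rodrigues n := by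
  have h := X_sq_sub_one_mul_iterate_derivative_pow n n
  simp only [Function.iterate_succ_apply'] at h
  rw [rodrigues]
  linear_combination h

noncomputable def soninPoly (n : ℕ) : ℝ[X] :=
  (n : ℝ[X]) * ((n : ℝ[X]) + 1) * (1 - X ^ 2) * rodrigues n ^ 2 +
    (1 - X ^ 2) ^ 2 * derivative (rodrigues n) ^ 2

theorem derivative_soninPoly (n : ℕ) :
    derivative (soninPoly n) = -2 * (n : ℝ[X]) * ((n : ℝ[X]) + 1) * X * rodrigues n ^ 2 := by
  simp only [soninPoly, derivative_mul, derivative_add, derivative_sub, derivative_one,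
    derivative_X, derivative_natCast, derivative_pow, C_eq_natCast]
  push_cast
  linear_combination (2 * (X ^ 2 - 1) * derivative (rodrigues n)) * rodrigues_ode n

theorem soninPoly_eval_le_eval_zero (n : ℕ) (x : ℝ) :
    (soninPoly n).eval x ≤ (soninPoly n).eval 0 := by
  have hderiv (y : ℝ) : deriv (fun t => (soninPoly n).eval t) y =
      -(2 * n * (n + 1) * (rodrigues n).eval y ^ 2) * y := by
    rw [Polynomial.deriv, derivative_soninPoly]
    simp only [eval_mul, eval_neg, eval_ofNat, eval_natCast, eval_add, eval_one, eval_X, eval_pow]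
    ring
  have hcoef (y : ℝ) : 0 ≤ 2 * n * (n + 1) * (rodrigues n).eval y ^ 2 := by positivity
  rcases le_total x 0 with hx | hx
  · refine monotoneOn_of_deriv_nonneg (convex_Iic 0) (soninPoly n).continuous.continuousOn
      (soninPoly n).differentiable.differentiableOn (fun y hy => ?_) hx (mem_Iic.2 le_rfl) hx
    rw [interior_Iic] at hy
    rw [hderiv]
    exact mul_nonneg_of_nonpos_of_nonpos (neg_nonpos.2 (hcoef y)) (le_of_lt hy)
  · refine antitoneOn_of_deriv_nonpos (convex_Ici 0) (soninPoly n).continuous.continuousOn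
      (soninPoly n).differentiable.differentiableOn (fun y hy => ?_) (mem_Ici.2 le_rfl) hx hx
    rw [interior_Ici] at hy
    rw [hderiv]
    exact mul_nonpos_of_nonpos_of_nonneg (neg_nonpos.2 (hcoef y)) (le_of_lt hy)

theorem rodrigues_eval_zero (n : ℕ) :
    (rodrigues n).eval 0 = n.factorial * ((X ^ 2 - 1 : ℝ[X]) ^ n).coeff n := by
  rw [rodrigues, ← coeff_zero_eq_eval_zero, coeff_iterate_derivative, zero_add,
    Nat.descFactorial_self, nsmul_eq_mul]

theorem derivative_rodrigues_eval_zero (n : ℕ) :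
    (derivative (rodrigues n)).eval 0 =
      (n + 1) * n.factorial * ((X ^ 2 - 1 : ℝ[X]) ^ n).coeff (n + 1) := by
  rw [rodrigues, ← Function.iterate_succ_apply' derivative, ← coeff_zero_eq_eval_zero,
    coeff_iterate_derivative, zero_add, Nat.descFactorial_self, nsmul_eq_mul,
    Nat.factorial_succ]
  push_cast
  ring

theorem soninPoly_eval_zero_le (n : ℕ) :
    (soninPoly n).eval 0 ≤ 2 * (2 * n + 1) * (2 ^ n * n.factorial) ^ 2 := by
  have hc := succ_mul_coeff_X_sq_sub_one_pow_sq_le n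
  have hval : (soninPoly n).eval 0 = n.factorial ^ 2 *
      (n * ((n + 1) * ((X ^ 2 - 1 : ℝ[X]) ^ n).coeff n ^ 2) +
        (n + 1) * ((n + 1) * ((X ^ 2 - 1 : ℝ[X]) ^ n).coeff (n + 1) ^ 2)) := by
    simp only [soninPoly, eval_add, eval_mul, eval_pow, eval_sub, eval_one, eval_X,
      eval_natCast, rodrigues_eval_zero, derivative_rodrigues_eval_zero]
    ring
  calc (soninPoly n).eval 0
      ≤ n.factorial ^ 2 * (n * (2 * 4 ^ n) + (n + 1) * (2 * 4 ^ n)) := by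
        rw [hval]; gcongr n.factorial ^ 2 * (_ * ?_ + _ * ?_) <;> exact hc _
    _ = 2 * (2 * n + 1) * (2 ^ n * n.factorial) ^ 2 := by
        rw [show (4 : ℝ) ^ n = (2 ^ n) ^ 2 by rw [← pow_mul, mul_comm, pow_mul]; norm_num]
        ring

theorem legendreP_sq_mul_le (n : ℕ) (x : ℝ) :
    n * (n + 1) * (1 - x ^ 2) * legendreP n x ^ 2 ≤ 2 * (2 * n + 1) := by
  have hlower : n * (n + 1) * (1 - x ^ 2) * (rodrigues n).eval x ^ 2 ≤ (soninPoly n).eval x := by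
    simp only [soninPoly, eval_add, eval_mul, eval_pow, eval_sub, eval_one, eval_X, eval_natCast]
    nlinarith [sq_nonneg ((1 - x ^ 2) * (derivative (rodrigues n)).eval x)]
  rw [legendreP_eq_eval_rodrigues, div_pow, mul_div_assoc', div_le_iff₀ (by positivity)]
  exact hlower.trans ((soninPoly_eval_le_eval_zero n x).trans (soninPoly_eval_zero_le n))

theorem legendreP_sq_le {n : ℕ} (hn : 0 < n) {x : ℝ} (hx : x ^ 2 < 1) :
    legendreP n x ^ 2 ≤ 4 / (n * (1 - x ^ 2)) := by
  have h := legendreP_sq_mul_le n x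
  have hn' : (0 : ℝ) < n := by exact_mod_cast hn
  rw [le_div_iff₀ (by nlinarith)]
  refine le_of_mul_le_mul_left ?_ (by positivity : (0 : ℝ) < n + 1)
  nlinarith

theorem legendreP_succ_sub_pred_sq_le {n : ℕ} (hn : 2 ≤ n) {x : ℝ} (hx : x ^ 2 < 1) :
    (legendreP (n + 1) x - legendreP (n - 1) x) ^ 2 ≤ 16 / ((n - 1) * (1 - x ^ 2)) := by
  have hn' : (2 : ℝ) ≤ n := by exact_mod_cast hn
  have hsucc := legendreP_sq_le n.succ_pos hx
  have hpred := legendreP_sq_le (by omega : 0 < n - 1) hx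
  rw [Nat.cast_sub (by omega), Nat.cast_one] at hpred
  push_cast at hsucc
  have hmono : 4 / ((n + 1) * (1 - x ^ 2)) ≤ 4 / ((n - 1) * (1 - x ^ 2)) := by
    gcongr
    · nlinarith
    · linarith
  calc (legendreP (n + 1) x - legendreP (n - 1) x) ^ 2
      ≤ 2 * legendreP (n + 1) x ^ 2 + 2 * legendreP (n - 1) x ^ 2 := by
        nlinarith [sq_nonneg (legendreP (n + 1) x + legendreP (n - 1) x)]
    _ ≤ 16 / ((n - 1) * (1 - x ^ 2)) := by
        rw [show (16 : ℝ) / ((n - 1) * (1 - x ^ 2)) =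
          2 * (4 / ((n - 1) * (1 - x ^ 2))) + 2 * (4 / ((n - 1) * (1 - x ^ 2))) by ring]
        gcongr
        exact hsucc.trans hmono

theorem sq_sum_mul_le_of_sq_le {ι : Type*} (s : Finset ι) (a d : ι → ℝ) {M : ℝ} (hM : 0 ≤ M)
    (hd : ∀ i ∈ s, d i ^ 2 ≤ M) :
    (∑ i ∈ s, a i * d i) ^ 2 ≤ (∑ i ∈ s, |a i|) ^ 2 * M := by
  have habs : |∑ i ∈ s, a i * d i| ≤ (∑ i ∈ s, |a i|) * √M := by
    rw [Finset.sum_mul]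
    refine (Finset.abs_sum_le_sum_abs _ _).trans (Finset.sum_le_sum fun i hi => ?_)
    rw [abs_mul]
    exact mul_le_mul_of_nonneg_left (Real.abs_le_sqrt (hd i hi)) (abs_nonneg _)
  calc (∑ i ∈ s, a i * d i) ^ 2 = |∑ i ∈ s, a i * d i| ^ 2 := (sq_abs _).symm
    _ ≤ ((∑ i ∈ s, |a i|) * √M) ^ 2 := by gcongr
    _ = (∑ i ∈ s, |a i|) ^ 2 * M := by rw [mul_pow, Real.sq_sqrt hM]

theorem Bterm_sq_le {K : ℕ} {b : ℕ → ℝ} {c : ℝ} (hc : 0 < c)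
    (hb : ∀ i ∈ Finset.Icc 1 K, c ≤ 1 - b i ^ 2) (G : ℕ → ℝ → ℝ) {n : ℕ} (hn : 2 ≤ n) :
    Bterm K b G n ^ 2 ≤ 4 / c * jumpSum K b G ^ 2 / n ^ 2 := by
  have hn' : (2 : ℝ) ≤ n := by exact_mod_cast hn
  have hn1 : (0 : ℝ) < n - 1 := by linarith
  have hd : ∀ i ∈ Finset.Icc 1 K,
      (legendreP (n + 1) (b i) - legendreP (n - 1) (b i)) ^ 2 ≤ 16 / ((n - 1) * c) :=
    fun i hi => (legendreP_succ_sub_pred_sq_le hn (by linarith [hb i hi])).trans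
      (div_le_div_of_nonneg_left (by norm_num) (mul_pos hn1 hc)
        (mul_le_mul_of_nonneg_left (hb i hi) hn1.le))
  have hsum := sq_sum_mul_le_of_sq_le (Finset.Icc 1 K) (fun i => G (i - 1) (b i) - G i (b i))
    (fun i => legendreP (n + 1) (b i) - legendreP (n - 1) (b i)) (by positivity) hd
  rw [show ∑ i ∈ Finset.Icc 1 K, |G (i - 1) (b i) - G i (b i)| = jumpSum K b G from
    Finset.sum_congr rfl fun i _ => abs_sub_comm _ _] at hsum
  have hcoef : (1 / (2 * √(2 * (n : ℝ) + 1))) ^ 2 = 1 / (4 * (2 * n + 1)) := by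
    rw [div_pow, mul_pow, Real.sq_sqrt (by positivity)]
    norm_num
  rw [Bterm, mul_pow, hcoef]
  calc _ ≤ 1 / (4 * (2 * n + 1)) * (jumpSum K b G ^ 2 * (16 / ((n - 1) * c))) := by gcongr
    _ = 4 / c * jumpSum K b G ^ 2 / ((2 * n + 1) * (n - 1)) := by
        field_simp
        ring
    _ ≤ 4 / c * jumpSum K b G ^ 2 / n ^ 2 := by
        gcongr
        nlinarith

theorem hasSum_hzeta {s a : ℝ} (hs : 1 < s) (ha : 0 < a) :
    HasSum (fun k : ℕ => ((k : ℝ) + a) ^ (-s)) (hzeta s a) := by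
  refine (((Real.summable_one_div_nat_add_rpow a s).2 hs).congr fun k => ?_).hasSum
  have hk : 0 < (k : ℝ) + a := by positivity
  rw [abs_of_pos hk, one_div, Real.rpow_neg hk.le]

/-- with interior breakpoints in [-0.9, 0.9], there is a universal
constant C > 0 bounding the tail sum of the squared jump terms by C·S²·ζ(2, N). -/
theorem tsum_Bterm_sq_le :
    ∃ C : ℝ, 0 < C ∧
      ∀ (K : ℕ) (b : ℕ → ℝ) (L : ℝ) (G : ℕ → ℝ → ℝ) (g : ℝ → ℝ),
        b 0 = -1 → b (K + 1) = 1 →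
        (∀ i ≤ K, b i < b (i + 1)) →
        0 ≤ L →
        (∀ i ≤ K, ContDiffOn ℝ 1 (G i) (Set.Icc (b i) (b (i + 1)))) →
        (∀ i ≤ K, ∀ y ∈ Set.Icc (b i) (b (i + 1)),
          |derivWithin (G i) (Set.Icc (b i) (b (i + 1))) y| ≤ L) →
        (∀ i < K, ∀ y, b i ≤ y → y < b (i + 1) → g y = G i y) →
        (∀ y ∈ Set.Icc (b K) (b (K + 1)), g y = G K y) →
        (∀ i, 1 ≤ i → i ≤ K → b i ∈ Set.Icc (-0.9 : ℝ) 0.9) →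
        ∀ N : ℕ, 2 ≤ N →
          (∑' k : ℕ, Bterm K b G (N + k) ^ 2) ≤ C * jumpSum K b G ^ 2 * hzeta 2 N := by
  refine ⟨4 / 0.19, by norm_num, ?_⟩
  intro K b L G g _ _ _ _ _ _ _ _ hb N hN
  have hc : ∀ i ∈ Finset.Icc 1 K, (0.19 : ℝ) ≤ 1 - b i ^ 2 := fun i hi => by
    obtain ⟨hi₁, hi₂⟩ := Finset.mem_Icc.1 hi
    obtain ⟨hlo, hhi⟩ := hb i hi₁ hi₂
    nlinarith
  have hterm (k : ℕ) :
      Bterm K b G (N + k) ^ 2 ≤ 4 / 0.19 * jumpSum K b G ^ 2 * ((k : ℝ) + N) ^ (-2 : ℝ) := by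
    rw [Real.rpow_neg (by positivity), Real.rpow_two, ← div_eq_mul_inv, add_comm, ← Nat.cast_add]
    exact Bterm_sq_le (by norm_num) hc G (by omega)
  have hbound := (hasSum_hzeta one_lt_two (by positivity : (0 : ℝ) < N)).mul_left
    (4 / 0.19 * jumpSum K b G ^ 2)
  rw [← hbound.tsum_eq]
  exact (hbound.summable.of_nonneg_of_le (fun _ => sq_nonneg _) hterm).tsum_le_tsum hterm
    hbound.summable
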